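/- arXiv:2512.05574 — 4 statements merged into one kernel-verified Lean document; each statement's English description precedes it below -/
import Mathlib

section
/- For all x, y ∈ Ω with x ≠ y and φ(y) ≠ 0, the gradient of γ_Ω in its first variable satisfies conj(∇₁γ_Ω(x,y)) = φ'(x)/(2π·(φ(x) − φ(y))) − 1/(2π·(x − y)) − φ'(x)/(2π·(φ(x) − 1/conj(φ(y)))). -/
open Complex Real

noncomputable section

/-- The gradient of a real-valued function on `ℂ ≅ ℝ²`, identified with the complex
number `∂₁ f + i·∂₂ f`. -/
def grad (f : ℂ → ℝ) (x : ℂ) : ℂ :=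
  (fderiv ℝ f x 1 : ℂ) + (fderiv ℝ f x Complex.I : ℂ) * Complex.I

/-- The regular part of the Green's function of `Ω`, expressed through the conformal map `φ`. -/
def gammaReg (φ : ℂ → ℂ) (x y : ℂ) : ℝ :=
  (1 / (2 * π)) * Real.log (‖φ x - φ y‖ / ‖x - y‖) -
    (1 / (2 * π)) * Real.log (‖1 - φ x * (starRingEnd ℂ) (φ y)‖)

/-- The Robin function of `Ω`. -/
def robin (φ : ℂ → ℂ) (x : ℂ) : ℝ :=
  (1 / (2 * π)) * Real.log (‖deriv φ x‖) -
    (1 / (2 * π)) * Real.log (1 - ‖φ x‖ ^ 2)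

/-- The right-hand side of the Kirchhoff–Routh equation for the vortex located at `w₁`,
with own strength `a₁`, the other vortex being at `w₂` with strength `a₂`. -/
def vortexRHS (φ : ℂ → ℂ) (a₁ a₂ : ℝ) (w₁ w₂ : ℂ) : ℂ :=
  ((a₁ : ℂ) / 2) * (Complex.I * grad (robin φ) w₁) +
    (a₂ : ℂ) * (Complex.I * (w₁ - w₂) / ((2 * π * ‖w₁ - w₂‖ ^ 2 : ℝ) : ℂ) +
      Complex.I * grad (fun x => gammaReg φ x w₂) w₁)

/-! Near `x`, `γ_Ω(·, y)` splits as
`(2π)⁻¹ (log |φ - φ y| - log |· - y| - log |1 - φ · conj (φ y)|)`, a sum of terms `log |g|` with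
`g` holomorphic and nonvanishing. The real differential of `log |g|` is `v ↦ Re ((g'/g) v)`, so its
gradient is `conj (g'/g)`; adding the three contributions and rewriting
`-φ' k / (1 - φ k) = φ' / (φ - 1/k)` with `k = conj (φ y)` gives the formula. -/

open ComplexConjugate Filter Topology

theorem conj_grad_eq_of_hasFDerivAt {f : ℂ → ℝ} {L : ℂ →L[ℝ] ℝ} {x c : ℂ}
    (hf : HasFDerivAt f L x) (hL : ∀ v, L v = (c * v).re) : conj (grad f x) = c := by
  rw [grad, hf.fderiv, hL, hL]
  apply Complex.ext <;> simp

theorem HasDerivAt.hasFDerivAt_log_norm {g : ℂ → ℂ} {d x : ℂ} (hg : HasDerivAt g d x)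
    (hgx : g x ≠ 0) :
    HasFDerivAt (fun z => Real.log ‖g z‖)
      (reCLM.comp ((d / g x) • ContinuousLinearMap.id ℝ ℂ)) x := by
  have hsq := (hg.hasFDerivAt.restrictScalars ℝ).norm_sq.log (by positivity)
  have hhalf : (fun z => Real.log ‖g z‖) = fun z => 2⁻¹ * Real.log (‖g z‖ ^ 2) := by
    funext z; rw [Real.log_pow]; push_cast; ring
  rw [hhalf]
  refine (hsq.const_mul _).congr_fderiv ?_
  have hn : normSq (g x) ≠ 0 := normSq_eq_zero.not.2 hgx
  ext v
  simp only [smul_apply, ContinuousLinearMap.comp_apply,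
    ContinuousLinearMap.coe_restrictScalars', ContinuousLinearMap.toSpanSingleton_apply,
    ContinuousLinearMap.id_apply, coe_innerSL_apply, Complex.inner, reCLM_apply, smul_eq_mul,
    nsmul_eq_mul, ← normSq_eq_norm_sq, mul_re, mul_im, conj_re, conj_im, div_re, div_im]
  field_simp
  ring

theorem gammaReg_eventuallyEq {φ : ℂ → ℂ} {x y : ℂ} (hφ : ContinuousAt φ x) (hxy : x ≠ y)
    (hφxy : φ x ≠ φ y) :
    (fun z => gammaReg φ z y) =ᶠ[𝓝 x] fun z => (2 * π)⁻¹ *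
      (Real.log ‖φ z - φ y‖ - Real.log ‖z - y‖ - Real.log ‖1 - φ z * conj (φ y)‖) := by
  filter_upwards [hφ.eventually_ne hφxy, eventually_ne_nhds hxy] with z hφz hz
  rw [gammaReg, Real.log_div (norm_ne_zero_iff.2 (sub_ne_zero.2 hφz))
    (norm_ne_zero_iff.2 (sub_ne_zero.2 hz))]
  ring

theorem one_sub_mul_conj_ne_zero {a b : ℂ} (ha : ‖a‖ < 1) (hb : ‖b‖ < 1) :
    1 - a * conj b ≠ 0 := by
  refine sub_ne_zero.2 fun h => ?_
  have : ‖a * conj b‖ < 1 := by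
    rw [norm_mul, norm_conj]
    exact mul_lt_one_of_nonneg_of_lt_one_left (norm_nonneg a) ha hb.le
  rw [← h, norm_one] at this
  exact this.false

theorem div_sub_one_div_eq {K : Type*} [Field K] {a d k : K} (hk : k ≠ 0) :
    d / (a - 1 / k) = -(d * k) / (1 - a * k) := by
  rw [← mul_div_mul_right d _ hk, neg_div, ← div_neg, neg_sub, sub_mul, one_div_mul_cancel hk]

theorem stmt5_general (Ω : Set ℂ) (φ : ℂ → ℂ)
    (hopen : IsOpen Ω)
    (hdiff : DifferentiableOn ℂ φ Ω)
    (hbij : Set.BijOn φ Ω (Metric.ball 0 1)) :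
    ∀ x ∈ Ω, ∀ y ∈ Ω, x ≠ y → φ y ≠ 0 →
      (starRingEnd ℂ) (grad (fun x' => gammaReg φ x' y) x) =
        deriv φ x / (2 * (π : ℂ) * (φ x - φ y)) - 1 / (2 * (π : ℂ) * (x - y)) -
          deriv φ x / (2 * (π : ℂ) * (φ x - 1 / (starRingEnd ℂ) (φ y))) := by
  intro x hx y hy hxy hφy
  have hφ : HasDerivAt φ (deriv φ x) x :=
    (hdiff.differentiableAt (hopen.mem_nhds hx)).hasDerivAt
  have hφxy : φ x ≠ φ y := fun h => hxy (hbij.injOn hx hy h)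
  have hdisc : 1 - φ x * conj (φ y) ≠ 0 := one_sub_mul_conj_ne_zero
    (mem_ball_zero_iff.1 (hbij.mapsTo hx)) (mem_ball_zero_iff.1 (hbij.mapsTo hy))
  have h₁ := (hφ.sub_const (φ y)).hasFDerivAt_log_norm (sub_ne_zero.2 hφxy)
  have h₂ := ((hasDerivAt_id' x).sub_const y).hasFDerivAt_log_norm (sub_ne_zero.2 hxy)
  have h₃ := ((hφ.mul_const (conj (φ y))).const_sub 1).hasFDerivAt_log_norm hdisc
  have hγ := (((h₁.sub h₂).sub h₃).const_mul (2 * π)⁻¹).congr_of_eventuallyEq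
    (gammaReg_eventuallyEq hφ.continuousAt hxy hφxy)
  calc conj (grad (fun x' => gammaReg φ x' y) x)
      = (2 * π : ℂ)⁻¹ * (deriv φ x / (φ x - φ y) - 1 / (x - y) -
          -(deriv φ x * conj (φ y)) / (1 - φ x * conj (φ y))) := by
        refine conj_grad_eq_of_hasFDerivAt hγ fun v => ?_
        simp only [smul_apply, sub_apply, ContinuousLinearMap.comp_apply,
          ContinuousLinearMap.id_apply, reCLM_apply, smul_eq_mul, ← sub_re, ← sub_mul]
        rw [mul_assoc, ← re_ofReal_mul]
        push_cast
        rfl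
    _ = _ := by
        rw [← div_sub_one_div_eq ((map_ne_zero _).2 hφy)]
        simp only [div_eq_mul_inv, mul_inv]
        ring

/-- **Explicit formula for `∇₁γ_Ω`** (equation (2.2)): for `x ≠ y` in `Ω` with `φ(y) ≠ 0`,
`conj(∇₁γ_Ω(x,y)) = φ'(x)/(2π(φ(x)−φ(y))) − 1/(2π(x−y)) − φ'(x)/(2π(φ(x)−1/conj(φ(y))))`. -/
theorem stmt5 (Ω : Set ℂ) (φ : ℂ → ℂ)
    (hopen : IsOpen Ω) (hne : Ω ≠ Set.univ) (h0 : (0 : ℂ) ∈ Ω)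
    (hconn : IsConnected Ω) (hsc : SimplyConnectedSpace ↥Ω)
    (hdiff : DifferentiableOn ℂ φ Ω)
    (hbij : Set.BijOn φ Ω (Metric.ball 0 1))
    (hφ0 : φ 0 = 0) :
    ∀ x ∈ Ω, ∀ y ∈ Ω, x ≠ y → φ y ≠ 0 →
      (starRingEnd ℂ) (grad (fun x' => gammaReg φ x' y) x) =
        deriv φ x / (2 * (π : ℂ) * (φ x - φ y)) - 1 / (2 * (π : ℂ) * (x - y)) -
          deriv φ x / (2 * (π : ℂ) * (φ x - 1 / (starRingEnd ℂ) (φ y))) :=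
  stmt5_general Ω φ hopen hdiff hbij
end
end

section
/- Let φ be holomorphic on a neighborhood of x₀ ∈ ℂ with φ'(x₀) ≠ 0. Then the limit as y → x₀ (y ≠ x₀, y close enough to x₀ so that φ(y) ≠ φ(x₀)) of φ'(x₀)·φ'(y)/(φ(x₀) − φ(y))² − 1/(x₀ − y)² exists and equals φ'''(x₀)/(6·φ'(x₀)) − φ''(x₀)²/(4·φ'(x₀)²). -/
open Complex Filter

private lemma iteratedDeriv_eq_coeff {f : ℂ → ℂ} {p : FormalMultilinearSeries ℂ ℂ ℂ} {x : ℂ}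
    (h : HasFPowerSeriesAt f p x) (n : ℕ) :
    iteratedDeriv n f x = (n.factorial : ℂ) * p.coeff n := by
  obtain ⟨r, hr⟩ := h
  have H := hr.factorial_smul (1 : ℂ) n
  rw [iteratedDeriv, ← H, nsmul_eq_mul]
  rfl

private lemma analyticAt_deriv {f : ℂ → ℂ} {x : ℂ} (h : AnalyticAt ℂ f x) :
    AnalyticAt ℂ (deriv f) x := by
  obtain ⟨s, hs, hmem⟩ := h.eventually_analyticAt.exists_mem
  exact (AnalyticOnNhd.deriv (fun y hy => hmem y hy)) x (mem_of_mem_nhds hs)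

/-- Equation (2.6): if `φ` is holomorphic near `x₀` with `φ'(x₀) ≠ 0`, then
`φ'(x₀)φ'(y)/(φ(x₀) − φ(y))² − 1/(x₀ − y)²
  → φ'''(x₀)/(6φ'(x₀)) − φ''(x₀)²/(4φ'(x₀)²)` as `y → x₀`, `y ≠ x₀`. -/
theorem stmt10 (φ : ℂ → ℂ) (x₀ : ℂ) (U : Set ℂ) (hU : IsOpen U) (hx₀ : x₀ ∈ U)
    (hφ : DifferentiableOn ℂ φ U) (hd : deriv φ x₀ ≠ 0) :
    Tendsto
      (fun y => deriv φ x₀ * deriv φ y / (φ x₀ - φ y) ^ 2 - 1 / (x₀ - y) ^ 2)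
      (nhdsWithin x₀ {x₀}ᶜ)
      (nhds (iteratedDeriv 3 φ x₀ / (6 * deriv φ x₀) -
        (iteratedDeriv 2 φ x₀) ^ 2 / (4 * (deriv φ x₀) ^ 2))) := by
  have hA : AnalyticAt ℂ φ x₀ := hφ.analyticAt (hU.mem_nhds hx₀)
  obtain ⟨p, hp⟩ := id hA
  set a : ℕ → ℂ := fun n => p.coeff n with ha
  -- basic coefficient identities
  have hc1 : deriv φ x₀ = a 1 := by
    have := iteratedDeriv_eq_coeff hp 1
    simpa [iteratedDeriv_one] using this
  have hc2 : iteratedDeriv 2 φ x₀ = 2 * a 2 := by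
    have := iteratedDeriv_eq_coeff hp 2
    norm_num [Nat.factorial] at this
    simpa using this
  have hc3 : iteratedDeriv 3 φ x₀ = 6 * a 3 := by
    have := iteratedDeriv_eq_coeff hp 3
    norm_num [Nat.factorial] at this
    simpa using this
  have ha1 : a 1 ≠ 0 := hc1 ▸ hd
  -- g = dslope φ x₀
  set g : ℂ → ℂ := dslope φ x₀ with hgdef
  have hg : HasFPowerSeriesAt g p.fslope x₀ := hp.has_fpower_series_dslope_fslope
  have hgA : AnalyticAt ℂ g x₀ := ⟨p.fslope, hg⟩
  have hg0 : g x₀ = a 1 := by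
    rw [hgdef, dslope_same, hc1]
  have hg1 : deriv g x₀ = a 2 := by
    have := iteratedDeriv_eq_coeff hg 1
    simpa [iteratedDeriv_one, FormalMultilinearSeries.coeff_fslope] using this
  have hg2 : iteratedDeriv 2 g x₀ = 2 * a 3 := by
    have := iteratedDeriv_eq_coeff hg 2
    norm_num [Nat.factorial, FormalMultilinearSeries.coeff_fslope] at this
    simpa using this
  -- the numerator N
  set N : ℂ → ℂ := fun y => a 1 * deriv φ y - (g y) ^ 2 with hNdef
  have hφ'A : AnalyticAt ℂ (deriv φ) x₀ := analyticAt_deriv hA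
  have hNA : AnalyticAt ℂ N x₀ := (analyticAt_const.mul hφ'A).sub (hgA.pow 2)
  obtain ⟨q, hq⟩ := hNA
  -- values of N and its derivatives at x₀
  have hN0 : N x₀ = 0 := by
    simp [hNdef, hg0, hc1]; ring
  -- first derivative of N at x₀
  have hφ'd : DifferentiableAt ℂ (deriv φ) x₀ := hφ'A.differentiableAt
  have hgd : DifferentiableAt ℂ g x₀ := hgA.differentiableAt
  have hc2' : deriv (deriv φ) x₀ = 2 * a 2 := by
    rw [← hc2]; rw [iteratedDeriv_succ, iteratedDeriv_one]
  have hDN : HasDerivAt N (a 1 * (2 * a 2) - 2 * g x₀ ^ 1 * deriv g x₀) x₀ := by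
    have h1 : HasDerivAt (deriv φ) (2 * a 2) x₀ := hc2' ▸ hφ'd.hasDerivAt
    have h2 : HasDerivAt g (deriv g x₀) x₀ := hgd.hasDerivAt
    exact (h1.const_mul (a 1)).sub (h2.pow 2)
  have hN1 : deriv N x₀ = 0 := by
    rw [hDN.deriv, hg0, hg1]; ring
  -- second derivative of N at x₀
  have hφ''A : AnalyticAt ℂ (deriv (deriv φ)) x₀ := analyticAt_deriv hφ'A
  have hg'A : AnalyticAt ℂ (deriv g) x₀ := analyticAt_deriv hgA
  have hc3' : deriv (deriv (deriv φ)) x₀ = 6 * a 3 := by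
    rw [← hc3]
    rw [show (3 : ℕ) = 2 + 1 from rfl, iteratedDeriv_succ, iteratedDeriv_succ,
      iteratedDeriv_one]
  have hg2' : deriv (deriv g) x₀ = 2 * a 3 := by
    rw [← hg2, iteratedDeriv_succ, iteratedDeriv_one]
  -- deriv N agrees with the formula near x₀
  have hEv : deriv N =ᶠ[nhds x₀] fun y => a 1 * deriv (deriv φ) y - 2 * (g y * deriv g y) := by
    filter_upwards [hφ'A.eventually_analyticAt, hgA.eventually_analyticAt] with y h1 h2
    have h1d : DifferentiableAt ℂ (deriv φ) y := h1.differentiableAt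
    have h2d : DifferentiableAt ℂ g y := h2.differentiableAt
    have : HasDerivAt N (a 1 * deriv (deriv φ) y - 2 * g y ^ 1 * deriv g y) y :=
      (h1d.hasDerivAt.const_mul (a 1)).sub (h2d.hasDerivAt.pow 2)
    rw [this.deriv]; ring
  have hN2 : iteratedDeriv 2 N x₀ = 2 * a 1 * a 3 - 2 * (a 2) ^ 2 := by
    rw [iteratedDeriv_succ, iteratedDeriv_one]
    rw [hEv.deriv_eq]
    have h1 : HasDerivAt (fun y => a 1 * deriv (deriv φ) y - 2 * (g y * deriv g y))
        (a 1 * (6 * a 3) - 2 * (deriv g x₀ * deriv g x₀ + g x₀ * deriv (deriv g) x₀)) x₀ := by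
      have hA1 : HasDerivAt (deriv (deriv φ)) (6 * a 3) x₀ :=
        hc3' ▸ hφ''A.differentiableAt.hasDerivAt
      have hA2 : HasDerivAt (fun y => g y * deriv g y)
          (deriv g x₀ * deriv g x₀ + g x₀ * deriv (deriv g) x₀) x₀ :=
        hgd.hasDerivAt.mul hg'A.differentiableAt.hasDerivAt
      exact (hA1.const_mul (a 1)).sub (hA2.const_mul 2)
    rw [h1.deriv, hg0, hg1, hg2']
    ring
  -- coefficients of q
  have hq0 : q.coeff 0 = 0 := by
    have := iteratedDeriv_eq_coeff hq 0
    simp only [iteratedDeriv_zero, Nat.factorial_zero, Nat.cast_one, one_mul] at this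
    rw [← this, hN0]
  have hq1 : q.coeff 1 = 0 := by
    have := iteratedDeriv_eq_coeff hq 1
    simp only [iteratedDeriv_one, Nat.factorial_one, Nat.cast_one, one_mul] at this
    rw [← this, hN1]
  have hq2 : q.coeff 2 = a 1 * a 3 - (a 2) ^ 2 := by
    have := iteratedDeriv_eq_coeff hq 2
    norm_num [Nat.factorial] at this
    rw [hN2] at this
    linear_combination -this / 2
  -- h = second iterated dslope of N
  set h : ℂ → ℂ := dslope (dslope N x₀) x₀ with hhdef
  have hh : HasFPowerSeriesAt h q.fslope.fslope x₀ :=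
    (hq.has_fpower_series_dslope_fslope).has_fpower_series_dslope_fslope
  have hhA : AnalyticAt ℂ h x₀ := ⟨_, hh⟩
  have hh0 : h x₀ = a 1 * a 3 - (a 2) ^ 2 := by
    have := iteratedDeriv_eq_coeff hh 0
    simp only [iteratedDeriv_zero, Nat.factorial_zero, Nat.cast_one, one_mul,
      FormalMultilinearSeries.coeff_fslope] at this
    rw [this, hq2]
  -- eventual equality of the expression with h y / g y ^ 2
  have hgne : ∀ᶠ y in nhds x₀, g y ≠ 0 :=
    hgA.continuousAt.eventually_ne (hg0 ▸ ha1)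
  have hkey : (fun y => deriv φ x₀ * deriv φ y / (φ x₀ - φ y) ^ 2 - 1 / (x₀ - y) ^ 2)
      =ᶠ[nhdsWithin x₀ {x₀}ᶜ] fun y => h y / g y ^ 2 := by
    filter_upwards [nhdsWithin_le_nhds hgne, self_mem_nhdsWithin] with y hgy hy
    have hyne : y ≠ x₀ := hy
    have hsub : y - x₀ ≠ 0 := sub_ne_zero.mpr hyne
    have hgval : φ y - φ x₀ = (y - x₀) * g y := by
      rw [hgdef, dslope_of_ne φ hyne, slope_def_field]
      field_simp
    have hhval : h y = N y / (y - x₀) ^ 2 := by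
      rw [hhdef, dslope_of_ne _ hyne, slope_def_field, dslope_same,
        dslope_of_ne _ hyne, slope_def_field, hN1, hN0, sub_zero, sub_zero, div_div, sq]
    have hNval : N y = a 1 * deriv φ y - g y ^ 2 := rfl
    rw [hhval, hNval, hc1]
    have h1 : φ x₀ - φ y = -((y - x₀) * g y) := by rw [← hgval]; ring
    have h2 : x₀ - y = -(y - x₀) := by ring
    have hx2 : (y - x₀) ^ 2 ≠ 0 := pow_ne_zero 2 hsub
    have hgy2 : g y ^ 2 ≠ 0 := pow_ne_zero 2 hgy
    rw [h1, h2, neg_sq, neg_sq, mul_pow, div_div, sub_div,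
      mul_comm ((y - x₀) ^ 2) (g y ^ 2), div_mul_cancel_left₀ hgy2, one_div]
  -- conclusion
  have hlim : Tendsto (fun y => h y / g y ^ 2) (nhdsWithin x₀ {x₀}ᶜ)
      (nhds (h x₀ / g x₀ ^ 2)) := by
    apply Tendsto.mono_left _ nhdsWithin_le_nhds
    exact (hhA.continuousAt.div ((hgA.continuousAt).pow 2)
      (by simpa [hg0] using pow_ne_zero 2 ha1))
  have hval : h x₀ / g x₀ ^ 2 = iteratedDeriv 3 φ x₀ / (6 * deriv φ x₀) -
      (iteratedDeriv 2 φ x₀) ^ 2 / (4 * (deriv φ x₀) ^ 2) := by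
    rw [hh0, hg0, hc1, hc2, hc3]
    field_simp
    ring
  rw [← hval]
  exact hlim.congr' hkey.symm
end

section
/- Let (x₁, x₂) : I → ℝ² be a differentiable solution, on an interval I, of the system 2π·x₁'(t) = −x₂/(1 − x₁² − x₂²) − x₂·(1 + x₁² + x₂²)/(1 − 2x₁² + 2x₂² + (x₁² + x₂²)²) + 1/(2·x₂) and 2π·x₂'(t) = x₁/(1 − x₁² − x₂²) − x₁·(1 − x₁² − x₂²)/(1 − 2x₁² + 2x₂² + (x₁² + x₂²)²), and assume that for all t ∈ I one has 0 < x₁(t)² + x₂(t)² < 1 and x₂(t) ≠ 0. Writing z(t) := x₁(t) + i·x₂(t), the quantity |1 − z(t)²| / ( (1 − |z(t)|²)·|z(t) − conj(z(t))| ) is constant on I. -/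
/-!
Write `z = a + ib` and `N = |1 - z²|²`. The identity `N = (1 - |z|²)² + 4b²` turns the square
of the quantity into `1/(4b²) + 1/(1 - |z|²)²`. Along the flow `2π b' = 4ab² / ((1 - |z|²) N)`
and `2π (|z|²)' = a (1 - |z|²)² / (b N)`, so the two terms of the derivative of this sum are
`∓ 2a / (2π b (1 - |z|²) N)` and cancel.
-/

open Complex Real ComplexConjugate

theorem Convex.is_const_of_hasDerivWithinAt_eq_zero {E : Type*} [NormedAddCommGroup E]
    [NormedSpace ℝ E] {s : Set ℝ} {f : ℝ → E} (hs : Convex ℝ s)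
    (hf : ∀ t ∈ s, HasDerivWithinAt f 0 s t) {x y : ℝ} (hx : x ∈ s) (hy : y ∈ s) :
    f x = f y := by
  have h := hs.norm_image_sub_le_of_norm_hasDerivWithin_le hf (C := 0) (by simp) hx hy
  rw [zero_mul, norm_le_zero_iff, sub_eq_zero] at h
  exact h.symm

theorem Complex.sq_norm_one_sub_sq (z : ℂ) :
    ‖1 - z ^ 2‖ ^ 2 = (1 - ‖z‖ ^ 2) ^ 2 + (2 * z.im) ^ 2 := by
  rw [Complex.sq_norm, Complex.sq_norm, normSq_apply, normSq_apply]
  simp only [pow_two, sub_re, sub_im, mul_re, mul_im, one_re, one_im]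
  ring

theorem Complex.norm_sub_conj (z : ℂ) : ‖z - conj z‖ = |2 * z.im| := by
  rw [sub_conj, norm_mul, norm_real, norm_I, mul_one, Real.norm_eq_abs]

noncomputable def vortexRatio (z : ℂ) : ℝ :=
  ‖1 - z ^ 2‖ / ((1 - ‖z‖ ^ 2) * ‖z - conj z‖)

noncomputable def vortexInvariant (a b : ℝ) : ℝ :=
  ((2 * b) ^ 2)⁻¹ + ((1 - (a ^ 2 + b ^ 2)) ^ 2)⁻¹

theorem vortexRatio_nonneg {z : ℂ} (hz : ‖z‖ ≤ 1) : 0 ≤ vortexRatio z := by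
  have : 0 ≤ 1 - ‖z‖ ^ 2 := sub_nonneg.2 (pow_le_one₀ (norm_nonneg z) hz)
  unfold vortexRatio
  positivity

theorem vortexRatio_sq {z : ℂ} (him : z.im ≠ 0) (hz : ‖z‖ ≠ 1) :
    vortexRatio z ^ 2 = vortexInvariant z.re z.im := by
  have hw : 1 - ‖z‖ ^ 2 ≠ 0 := by
    rw [sub_ne_zero, ne_comm, Ne, pow_eq_one_iff_of_nonneg (norm_nonneg z) two_ne_zero]
    exact hz
  rw [vortexRatio, vortexInvariant, ← normSq_add_mul_I, re_add_im, ← Complex.sq_norm, div_pow,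
    mul_pow, sq_norm_one_sub_sq, norm_sub_conj, sq_abs]
  field_simp

noncomputable def vortexVelocity₁ (a b : ℝ) : ℝ :=
  (-b / (1 - a ^ 2 - b ^ 2) - b * (1 + a ^ 2 + b ^ 2) /
    (1 - 2 * a ^ 2 + 2 * b ^ 2 + (a ^ 2 + b ^ 2) ^ 2) + 1 / (2 * b)) / (2 * π)

noncomputable def vortexVelocity₂ (a b : ℝ) : ℝ :=
  (a / (1 - a ^ 2 - b ^ 2) - a * (1 - a ^ 2 - b ^ 2) /
    (1 - 2 * a ^ 2 + 2 * b ^ 2 + (a ^ 2 + b ^ 2) ^ 2)) / (2 * π)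

theorem hasDerivWithinAt_vortexInvariant {f g : ℝ → ℝ} {f' g' t : ℝ} {s : Set ℝ}
    (hf : HasDerivWithinAt f f' s t) (hg : HasDerivWithinAt g g' s t) (hb : g t ≠ 0)
    (hw : 1 - (f t ^ 2 + g t ^ 2) ≠ 0) :
    HasDerivWithinAt (fun t ↦ vortexInvariant (f t) (g t))
      (4 * (f t * f' + g t * g') / (1 - (f t ^ 2 + g t ^ 2)) ^ 3 - 4 * g' / (2 * g t) ^ 3)
      s t := by
  have hw' : HasDerivWithinAt (fun t ↦ 1 - (f t ^ 2 + g t ^ 2))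
      (-(2 * (f t * f' + g t * g'))) s t := by
    refine (((hf.fun_pow 2).fun_add (hg.fun_pow 2)).const_sub 1).congr_deriv ?_
    norm_num
    ring
  refine ((((hg.const_mul 2).fun_pow 2).fun_inv (by positivity)).fun_add
    ((hw'.fun_pow 2).fun_inv (pow_ne_zero 2 hw))).congr_deriv ?_
  norm_num
  field_simp
  ring

theorem vortexInvariant_deriv_along_vortexVelocity_eq_zero {a b : ℝ} (hb : b ≠ 0)
    (hw : 1 - (a ^ 2 + b ^ 2) ≠ 0) :
    4 * (a * vortexVelocity₁ a b + b * vortexVelocity₂ a b) / (1 - (a ^ 2 + b ^ 2)) ^ 3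
      - 4 * vortexVelocity₂ a b / (2 * b) ^ 3 = 0 := by
  have hN : 1 - 2 * a ^ 2 + 2 * b ^ 2 + (a ^ 2 + b ^ 2) ^ 2 =
      (1 - (a ^ 2 + b ^ 2)) ^ 2 + (2 * b) ^ 2 := by
    ring
  have hN0 : (1 - (a ^ 2 + b ^ 2)) ^ 2 + (2 * b) ^ 2 ≠ 0 := by positivity
  have hw1 : 1 - a ^ 2 - b ^ 2 ≠ 0 := by rwa [sub_sub]
  unfold vortexVelocity₁ vortexVelocity₂
  rw [hN]
  field_simp
  ring

theorem vortexInvariant_eq_of_solution {I : Set ℝ} (hI : Convex ℝ I) {x₁ x₂ : ℝ → ℝ}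
    (hw : ∀ t ∈ I, x₁ t ^ 2 + x₂ t ^ 2 ≠ 1) (hx₂ : ∀ t ∈ I, x₂ t ≠ 0)
    (hsol₁ : ∀ t ∈ I, HasDerivWithinAt x₁ (vortexVelocity₁ (x₁ t) (x₂ t)) I t)
    (hsol₂ : ∀ t ∈ I, HasDerivWithinAt x₂ (vortexVelocity₂ (x₁ t) (x₂ t)) I t)
    {s t : ℝ} (hs : s ∈ I) (ht : t ∈ I) :
    vortexInvariant (x₁ s) (x₂ s) = vortexInvariant (x₁ t) (x₂ t) := by
  refine hI.is_const_of_hasDerivWithinAt_eq_zero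
    (f := fun t ↦ vortexInvariant (x₁ t) (x₂ t)) (fun t ht ↦ ?_) hs ht
  have hw' : 1 - (x₁ t ^ 2 + x₂ t ^ 2) ≠ 0 := sub_ne_zero.2 (hw t ht).symm
  simpa only [vortexInvariant_deriv_along_vortexVelocity_eq_zero (hx₂ t ht) hw'] using
    hasDerivWithinAt_vortexInvariant (hsol₁ t ht) (hsol₂ t ht) (hx₂ t ht) hw'

/-- For the reduced system of two opposite point vortices `z₁ = conj(z₂) = x₁ + i x₂` in the
unit disc, the quantity `|1 − z²| / ((1 − |z|²)·|z − z̄|)` is constant along solutions. -/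
theorem stmt16 (I : Set ℝ) (hI : Convex ℝ I) (x₁ x₂ : ℝ → ℝ)
    (hball : ∀ t ∈ I, 0 < x₁ t ^ 2 + x₂ t ^ 2 ∧ x₁ t ^ 2 + x₂ t ^ 2 < 1)
    (hx₂ : ∀ t ∈ I, x₂ t ≠ 0)
    (hsol₁ : ∀ t ∈ I, HasDerivWithinAt x₁
      ((-x₂ t / (1 - x₁ t ^ 2 - x₂ t ^ 2) -
          x₂ t * (1 + x₁ t ^ 2 + x₂ t ^ 2) /
            (1 - 2 * x₁ t ^ 2 + 2 * x₂ t ^ 2 + (x₁ t ^ 2 + x₂ t ^ 2) ^ 2) +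
          1 / (2 * x₂ t)) / (2 * π)) I t)
    (hsol₂ : ∀ t ∈ I, HasDerivWithinAt x₂
      ((x₁ t / (1 - x₁ t ^ 2 - x₂ t ^ 2) -
          x₁ t * (1 - x₁ t ^ 2 - x₂ t ^ 2) /
            (1 - 2 * x₁ t ^ 2 + 2 * x₂ t ^ 2 + (x₁ t ^ 2 + x₂ t ^ 2) ^ 2)) / (2 * π)) I t) :
    ∀ s ∈ I, ∀ t ∈ I,
      ‖1 - ((x₁ s : ℂ) + (x₂ s : ℂ) * Complex.I) ^ 2‖ /
          ((1 - ‖(x₁ s : ℂ) + (x₂ s : ℂ) * Complex.I‖ ^ 2) *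
            ‖((x₁ s : ℂ) + (x₂ s : ℂ) * Complex.I) -
              (starRingEnd ℂ) ((x₁ s : ℂ) + (x₂ s : ℂ) * Complex.I)‖) =
        ‖1 - ((x₁ t : ℂ) + (x₂ t : ℂ) * Complex.I) ^ 2‖ /
          ((1 - ‖(x₁ t : ℂ) + (x₂ t : ℂ) * Complex.I‖ ^ 2) *
            ‖((x₁ t : ℂ) + (x₂ t : ℂ) * Complex.I) -
              (starRingEnd ℂ) ((x₁ t : ℂ) + (x₂ t : ℂ) * Complex.I)‖) := by
  intro s hs t ht
  have hz : ∀ t ∈ I, ‖(x₁ t : ℂ) + x₂ t * Complex.I‖ < 1 := fun t ht ↦ by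
    rw [← sq_lt_one_iff₀ (norm_nonneg _), Complex.sq_norm, normSq_add_mul_I]
    exact (hball t ht).2
  have hsq : ∀ t ∈ I,
      vortexRatio (x₁ t + x₂ t * Complex.I) ^ 2 = vortexInvariant (x₁ t) (x₂ t) :=
    fun t ht ↦ by simpa using vortexRatio_sq (by simpa using hx₂ t ht) (hz t ht).ne
  change vortexRatio _ = vortexRatio _
  rw [← pow_left_inj₀ (vortexRatio_nonneg (hz s hs).le) (vortexRatio_nonneg (hz t ht).le)
    two_ne_zero, hsq s hs, hsq t ht]
  exact vortexInvariant_eq_of_solution hI (fun t ht ↦ (hball t ht).2.ne) hx₂ hsol₁ hsol₂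
    hs ht
end

section
/- There exists r₀ > 0 such that every maximal solution x : I → ℝ² \ {0} of the toy-model system x₁'(t) = x₁ − x₂/(x₁² + x₂²), x₂'(t) = −x₂ + x₁/(x₁² + x₂²) with initial datum satisfying 0 < |x(0)| < r₀ is defined for all t ∈ ℝ and is periodic, i.e. there exists a period τ > 0 with x(t + τ) = x(t) for all t ∈ ℝ. -/
/-!
The function `H x = ½ log |x|² - x₁ x₂` is a first integral. For small `|x(0)|` its value `c` is
below `-1/2`, and `H` takes values `≥ -1/2` on the unit circle, so the orbit stays in the compact
annulus `e^(2c-1) ≤ |x|² ≤ e^(2c+1) < 1` away from the singularity; a solution confined to a compact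
subset of the domain of a locally Lipschitz field is global. Inside the unit disc the angular
velocity `(1 - 2 x₁ x₂) / |x|²` is at least `1 - |x|²`, so the orbit crosses the diagonal `x₁ = x₂`
at arbitrarily late times. The field is reversible under `(t, x₁, x₂) ↦ (-t, x₂, x₁)`, so by
uniqueness the orbit is symmetric about every crossing time, and two such reflections compose to a
translation in time.
-/

/-- The right-hand side of the toy-model ODE `ẋ = A x + x^⊥/|x|²`, `A = diag(1,−1)`. -/
noncomputable def toyRHS (p : ℝ × ℝ) : ℝ × ℝ :=
  (p.1 - p.2 / (p.1 ^ 2 + p.2 ^ 2), -p.2 + p.1 / (p.1 ^ 2 + p.2 ^ 2))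

open Set Metric Real
open scoped NNReal

section ODE

variable {E : Type*} [NormedAddCommGroup E] [NormedSpace ℝ E]

theorem IsPicardLindelof.exists_eq_forall_mem_Icc_hasDerivWithinAt_mem_closedBall
    [CompleteSpace E] {f : ℝ → E → E} {tmin tmax : ℝ} {t₀ : Icc tmin tmax} {x₀ : E}
    {a L K : ℝ≥0} (hf : IsPicardLindelof f t₀ x₀ a 0 L K) :
    ∃ α : ℝ → E, α t₀ = x₀ ∧ ∀ t ∈ Icc tmin tmax,
      HasDerivWithinAt α (f t (α t)) (Icc tmin tmax) t ∧ α t ∈ closedBall x₀ a := by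
  -- as in `exists_eq_forall_mem_Icc_hasDerivWithinAt`, which does not record the last conjunct
  have hx₀ : x₀ ∈ closedBall x₀ (0 : ℝ≥0) := mem_closedBall_self le_rfl
  obtain ⟨α, hα⟩ := ODE.FunSpace.exists_isFixedPt_next hf hx₀
  refine ⟨α.compProj, by rw [ODE.FunSpace.compProj_val, ← hα, ODE.FunSpace.next_apply₀],
    fun t ht ↦ ⟨?_, α.compProj_mem_closedBall hf.mul_max_le⟩⟩
  refine (ODE.hasDerivWithinAt_picard_Icc t₀.2 hf.continuousOn_uncurry
    α.continuous_compProj.continuousOn (fun _ _ ↦ α.compProj_mem_closedBall hf.mul_max_le)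
    x₀ ht).congr_of_mem (fun t' ht' ↦ ?_) ht
  nth_rw 1 [← hα]
  rw [ODE.FunSpace.compProj_of_mem ht', ODE.FunSpace.next_apply]

theorem exists_eq_forall_mem_Ioo_hasDerivAt_mem_closedBall [CompleteSpace E] {v : E → E}
    {x₀ : E} {a L K : ℝ≥0} (hK : LipschitzOnWith K v (closedBall x₀ a))
    (hL : ∀ p ∈ closedBall x₀ a, ‖v p‖ ≤ L) {ε : ℝ} (hε : 0 ≤ ε) (hεa : L * ε ≤ a) (t₀ : ℝ) :
    ∃ y : ℝ → E, y t₀ = x₀ ∧ ∀ t ∈ Ioo (t₀ - ε) (t₀ + ε),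
      HasDerivAt y (v (y t)) t ∧ y t ∈ closedBall x₀ a := by
  have hpl : IsPicardLindelof (fun _ ↦ v) (⟨t₀, by simp [hε]⟩ : Icc (t₀ - ε) (t₀ + ε)) x₀ a 0 L K :=
    .of_time_independent hL hK (by simpa using hεa)
  obtain ⟨y, hy₀, hy⟩ := hpl.exists_eq_forall_mem_Icc_hasDerivWithinAt_mem_closedBall
  exact ⟨y, hy₀, fun t ht ↦ ⟨(hy t (Ioo_subset_Icc_self ht)).1.hasDerivAt (Icc_mem_nhds ht.1 ht.2),
    (hy t (Ioo_subset_Icc_self ht)).2⟩⟩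

theorem ContDiffOn.locallyLipschitzOn_of_isOpen {F : Type*} [NormedAddCommGroup F]
    [NormedSpace ℝ F] {f : E → F} {U : Set E} (hU : IsOpen U) (hf : ContDiffOn ℝ 1 f U) :
    LocallyLipschitzOn U f := fun _ hx ↦ by
  obtain ⟨K, t, ht, hK⟩ := (hf.contDiffAt (hU.mem_nhds hx)).exists_lipschitzOnWith
  exact ⟨K, t, nhdsWithin_le_nhds ht, hK⟩

theorem ODE_solution_unique_of_ordConnected {v : E → E} {s : Set E} {K : ℝ≥0}
    (hv : LipschitzOnWith K v s) {S : Set ℝ} (hS : S.OrdConnected) {f g : ℝ → E}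
    (hf : ∀ t ∈ S, HasDerivAt f (v (f t)) t ∧ f t ∈ s)
    (hg : ∀ t ∈ S, HasDerivAt g (v (g t)) t ∧ g t ∈ s) {t₀ : ℝ} (ht₀ : t₀ ∈ S)
    (heq : f t₀ = g t₀) : EqOn f g S := by
  intro t ht
  rcases le_total t₀ t with h | h
  · have hsub : Icc t₀ t ⊆ S := hS.out ht₀ ht
    exact ODE_solution_unique_of_mem_Icc_right (v := fun _ ↦ v) (s := fun _ ↦ s)
      (fun _ _ ↦ hv) (HasDerivAt.continuousOn fun u hu ↦ (hf u (hsub hu)).1)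
      (fun u hu ↦ (hf u (hsub (Ico_subset_Icc_self hu))).1.hasDerivWithinAt)
      (fun u hu ↦ (hf u (hsub (Ico_subset_Icc_self hu))).2)
      (HasDerivAt.continuousOn fun u hu ↦ (hg u (hsub hu)).1)
      (fun u hu ↦ (hg u (hsub (Ico_subset_Icc_self hu))).1.hasDerivWithinAt)
      (fun u hu ↦ (hg u (hsub (Ico_subset_Icc_self hu))).2) heq ⟨h, le_rfl⟩
  · have hsub : Icc t t₀ ⊆ S := hS.out ht ht₀
    exact ODE_solution_unique_of_mem_Icc_left (v := fun _ ↦ v) (s := fun _ ↦ s)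
      (fun _ _ ↦ hv) (HasDerivAt.continuousOn fun u hu ↦ (hf u (hsub hu)).1)
      (fun u hu ↦ (hf u (hsub (Ioc_subset_Icc_self hu))).1.hasDerivWithinAt)
      (fun u hu ↦ (hf u (hsub (Ioc_subset_Icc_self hu))).2)
      (HasDerivAt.continuousOn fun u hu ↦ (hg u (hsub hu)).1)
      (fun u hu ↦ (hg u (hsub (Ioc_subset_Icc_self hu))).1.hasDerivWithinAt)
      (fun u hu ↦ (hg u (hsub (Ioc_subset_Icc_self hu))).2) heq ⟨le_rfl, h⟩

theorem ODE_solution_piecewise {v : E → E} {U : Set E} {I J : Set ℝ} [DecidablePred (· ∈ I)]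
    (hI : IsOpen I) (hJ : IsOpen J) {x y : ℝ → E} (hxy : EqOn x y (I ∩ J))
    (hx : ∀ t ∈ I, x t ∈ U ∧ HasDerivAt x (v (x t)) t)
    (hy : ∀ t ∈ J, y t ∈ U ∧ HasDerivAt y (v (y t)) t) :
    ∀ t ∈ I ∪ J,
      I.piecewise x y t ∈ U ∧ HasDerivAt (I.piecewise x y) (v (I.piecewise x y t)) t := by
  have hzx : EqOn (I.piecewise x y) x I := piecewise_eqOn _ _ _
  have hzy : EqOn (I.piecewise x y) y J := fun t ht ↦ by
    by_cases htI : t ∈ I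
    · rw [piecewise_eq_of_mem _ _ _ htI, hxy ⟨htI, ht⟩]
    · rw [piecewise_eq_of_notMem _ _ _ htI]
  rintro t (ht | ht)
  · rw [hzx ht]
    exact ⟨(hx t ht).1,
      (hx t ht).2.congr_of_eventuallyEq (hzx.eventuallyEq_of_mem (hI.mem_nhds ht))⟩
  · rw [hzy ht]
    exact ⟨(hy t ht).1,
      (hy t ht).2.congr_of_eventuallyEq (hzy.eventuallyEq_of_mem (hJ.mem_nhds ht))⟩

theorem exists_uniform_local_solution [ProperSpace E] {v : E → E} {U A : Set E} (hU : IsOpen U)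
    (hv : LocallyLipschitzOn U v) (hA : IsCompact A) (hAU : A ⊆ U) :
    ∃ B ⊆ U, A ⊆ B ∧ (∃ K, LipschitzOnWith K v B) ∧ ∃ ε > 0, ∀ x₀ ∈ A, ∀ t₀ : ℝ,
      ∃ y : ℝ → E, y t₀ = x₀ ∧ ∀ t ∈ Ioo (t₀ - ε) (t₀ + ε), HasDerivAt y (v (y t)) t ∧ y t ∈ B := by
  obtain ⟨δ, hδ, hδU⟩ := hA.exists_cthickening_subset_open hU hAU
  have hB : IsCompact (cthickening δ A) := hA.cthickening
  obtain ⟨K, hK⟩ := (hv.mono hδU).exists_lipschitzOnWith_of_compact hB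
  obtain ⟨L, hL⟩ := hB.exists_bound_of_continuousOn (hv.continuousOn.mono hδU)
  set L' : ℝ≥0 := ⟨max L 0, le_max_right _ _⟩
  refine ⟨_, hδU, self_subset_cthickening A, ⟨K, hK⟩, δ / (L' + 1), by positivity,
    fun x₀ hx₀ t₀ ↦ ?_⟩
  have hball : closedBall x₀ (⟨δ, hδ.le⟩ : ℝ≥0) ⊆ cthickening δ A :=
    closedBall_subset_cthickening hx₀ δ
  obtain ⟨y, hy₀, hy⟩ := exists_eq_forall_mem_Ioo_hasDerivAt_mem_closedBall (hK.mono hball)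
    (fun p hp ↦ (hL p (hball hp)).trans (le_max_left _ _)) (by positivity)
    (show (L' : ℝ) * (δ / (L' + 1)) ≤ δ by
      rw [mul_div_assoc']; exact div_le_of_le_mul₀ (by positivity) hδ.le (by linarith)) t₀
  exact ⟨y, hy₀, fun t ht ↦ ⟨(hy t ht).1, hball (hy t ht).2⟩⟩

theorem eq_univ_of_forall_mem_isCompact [ProperSpace E] {v : E → E} {U A : Set E}
    (hU : IsOpen U) (hv : LocallyLipschitzOn U v) (hA : IsCompact A) (hAU : A ⊆ U)
    {I : Set ℝ} {x : ℝ → E} (hIo : IsOpen I) (hIc : IsPreconnected I) (hIne : I.Nonempty)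
    (hx : ∀ t ∈ I, x t ∈ U ∧ HasDerivAt x (v (x t)) t) (hxA : ∀ t ∈ I, x t ∈ A)
    (hmax : ∀ (J : Set ℝ) (y : ℝ → E), IsOpen J → IsPreconnected J → I ⊆ J →
      (∀ t ∈ J, y t ∈ U ∧ HasDerivAt y (v (y t)) t) → (∀ t ∈ I, y t = x t) → J ⊆ I) :
    I = univ := by
  classical
  obtain ⟨B, hBU, hAB, ⟨K, hK⟩, ε, hε, hloc⟩ := exists_uniform_local_solution hU hv hA hAU
  by_contra hI
  obtain ⟨b, hb⟩ := nonempty_frontier_iff.2 ⟨hIne, hI⟩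
  rw [hIo.frontier_eq] at hb
  obtain ⟨t₁, ht₁, hbt₁⟩ := Metric.mem_closure_iff.1 hb.1 ε hε
  obtain ⟨y, hy₁, hy⟩ := hloc (x t₁) (hxA t₁ ht₁) t₁
  set J := Ioo (t₁ - ε) (t₁ + ε)
  have ht₁J : t₁ ∈ J := ⟨by linarith, by linarith⟩
  have hbJ : b ∈ J := by
    rw [dist_comm, Real.dist_eq, abs_lt] at hbt₁
    exact ⟨by linarith, by linarith⟩
  have hxy : EqOn x y (I ∩ J) :=
    ODE_solution_unique_of_ordConnected hK (hIc.ordConnected.inter ordConnected_Ioo)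
      (fun t ht ↦ ⟨(hx t ht.1).2, hAB (hxA t ht.1)⟩) (fun t ht ↦ hy t ht.2) ⟨ht₁, ht₁J⟩
      hy₁.symm
  refine hb.2 (hmax (I ∪ J) (I.piecewise x y) (hIo.union isOpen_Ioo)
    (hIc.union t₁ ht₁ ht₁J isPreconnected_Ioo) subset_union_left
    (ODE_solution_piecewise hIo isOpen_Ioo hxy hx fun t ht ↦ ⟨hBU (hy t ht).2, (hy t ht).1⟩)
    (fun t ht ↦ piecewise_eq_of_mem _ _ _ ht) (Or.inr hbJ))

end ODE

theorem exists_mem_Icc_eq_zero_of_le_angular_speed {u v u' v' : ℝ → ℝ} {a b μ : ℝ}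
    (hu : ∀ t ∈ Icc a b, HasDerivAt u (u' t) t) (hv : ∀ t ∈ Icc a b, HasDerivAt v (v' t) t)
    (hμ : ∀ t ∈ Icc a b, μ * (u t ^ 2 + v t ^ 2) ≤ u t * v' t - v t * u' t)
    (hab : a ≤ b) (hπ : π ≤ μ * (b - a)) : ∃ t ∈ Icc a b, u t = 0 := by
  by_contra! hu₀
  have hθ : ∀ t ∈ Icc a b, HasDerivAt (fun s ↦ arctan (v s / u s))
      ((u t * v' t - v t * u' t) / (u t ^ 2 + v t ^ 2)) t := fun t ht ↦ by
    convert ((hv t ht).fun_div (hu t ht) (hu₀ t ht)).arctan using 1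
    have := hu₀ t ht
    field_simp
  have hab' : a < b := hab.lt_of_ne fun h ↦ by subst h; linarith [Real.pi_pos]
  obtain ⟨ξ, hξ, hslope⟩ := exists_hasDerivAt_eq_slope _ _ hab'
    (fun t ht ↦ (hθ t ht).continuousAt.continuousWithinAt)
    (fun t ht ↦ hθ t (Ioo_subset_Icc_self ht))
  have hξ' := Ioo_subset_Icc_self hξ
  have hrate : μ ≤ (arctan (v b / u b) - arctan (v a / u a)) / (b - a) := by
    rw [← hslope, le_div_iff₀ (by positivity [hu₀ ξ hξ'] : (0:ℝ) < u ξ ^ 2 + v ξ ^ 2)]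
    exact hμ ξ hξ'
  rw [le_div_iff₀ (sub_pos.2 hab')] at hrate
  linarith [arctan_lt_pi_div_two (v b / u b), neg_pi_div_two_lt_arctan (v a / u a)]

def euclidNormSq (p : ℝ × ℝ) : ℝ := p.1 ^ 2 + p.2 ^ 2

noncomputable def toyHamiltonian (p : ℝ × ℝ) : ℝ := log (euclidNormSq p) / 2 - p.1 * p.2

def annulus (m M : ℝ) : Set (ℝ × ℝ) := euclidNormSq ⁻¹' Icc m M

lemma euclidNormSq_pos {p : ℝ × ℝ} (hp : p ≠ 0) : 0 < euclidNormSq p := by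
  have : p.1 ≠ 0 ∨ p.2 ≠ 0 := by
    contrapose! hp
    exact Prod.ext hp.1 hp.2
  unfold euclidNormSq
  rcases this with h | h <;> positivity

lemma continuous_euclidNormSq : Continuous euclidNormSq := by
  unfold euclidNormSq
  fun_prop

lemma euclidNormSq_swap (p : ℝ × ℝ) : euclidNormSq p.swap = euclidNormSq p :=
  add_comm _ _

lemma two_mul_abs_mul_le_euclidNormSq (p : ℝ × ℝ) : 2 * |p.1 * p.2| ≤ euclidNormSq p := by
  rw [abs_mul, euclidNormSq, ← sq_abs p.1, ← sq_abs p.2]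
  linarith [two_mul_le_add_sq |p.1| |p.2|]

lemma swap_mem_annulus {m M : ℝ} {p : ℝ × ℝ} (hp : p ∈ annulus m M) : p.swap ∈ annulus m M := by
  rwa [annulus, mem_preimage, euclidNormSq_swap]

lemma isCompact_annulus (m M : ℝ) : IsCompact (annulus m M) := by
  refine (isCompact_closedBall 0 √M).of_isClosed_subset
    (isClosed_Icc.preimage continuous_euclidNormSq) fun p hp ↦ ?_
  have hM : euclidNormSq p ≤ M := hp.2
  rw [mem_closedBall_zero_iff, Prod.norm_def, Real.norm_eq_abs, Real.norm_eq_abs]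
  exact max_le (abs_le_sqrt (by unfold euclidNormSq at hM; nlinarith [sq_nonneg p.2]))
    (abs_le_sqrt (by unfold euclidNormSq at hM; nlinarith [sq_nonneg p.1]))

lemma annulus_subset_compl_zero {m M : ℝ} (hm : 0 < m) : annulus m M ⊆ {0}ᶜ := by
  rintro p hp rfl
  have : m ≤ 0 := by simpa [euclidNormSq] using hp.1
  linarith

lemma contDiffOn_toyRHS : ContDiffOn ℝ 1 toyRHS {0}ᶜ := by
  have hN : ∀ p ∈ ({0}ᶜ : Set (ℝ × ℝ)), p.1 ^ 2 + p.2 ^ 2 ≠ 0 := fun p hp ↦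
    (euclidNormSq_pos hp).ne'
  unfold toyRHS
  fun_prop (disch := exact hN _ ‹_›)

lemma toyRHS_swap (p : ℝ × ℝ) : toyRHS p.swap = -(toyRHS p).swap := by
  simp only [toyRHS, Prod.fst_swap, Prod.snd_swap, Prod.swap_prod_mk, Prod.neg_mk,
    add_comm (p.2 ^ 2)]
  ext <;> ring

lemma toy_angular_speed {p : ℝ × ℝ} (hp : p ≠ 0) :
    p.1 * (toyRHS p).2 - p.2 * (toyRHS p).1 = 1 - 2 * (p.1 * p.2) := by
  have h := (euclidNormSq_pos hp).ne'
  simp only [toyRHS, euclidNormSq] at *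
  field_simp
  ring

lemma hasDerivAt_toyHamiltonian_comp {x : ℝ → ℝ × ℝ} {t : ℝ}
    (hx : HasDerivAt x (toyRHS (x t)) t) (h₀ : x t ≠ 0) :
    HasDerivAt (fun s ↦ toyHamiltonian (x s)) 0 t := by
  have hN := (euclidNormSq_pos h₀).ne'
  have h₁ : HasDerivAt (fun s ↦ (x s).1) (toyRHS (x t)).1 t := hx.fst
  have h₂ : HasDerivAt (fun s ↦ (x s).2) (toyRHS (x t)).2 t := hx.snd
  refine ((((h₁.fun_pow 2).fun_add (h₂.fun_pow 2)).log hN).div_const 2 |>.fun_sub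
    (h₁.fun_mul h₂)).congr_deriv ?_
  simp only [toyRHS, euclidNormSq] at hN ⊢
  field_simp
  ring

lemma locallyLipschitzOn_toyRHS : LocallyLipschitzOn {0}ᶜ toyRHS :=
  contDiffOn_toyRHS.locallyLipschitzOn_of_isOpen isOpen_compl_singleton

lemma toyHamiltonian_eq_of_isPreconnected {I : Set ℝ} (hIo : IsOpen I) (hIc : IsPreconnected I)
    {x : ℝ → ℝ × ℝ} (hx : ∀ t ∈ I, x t ≠ 0 ∧ HasDerivAt x (toyRHS (x t)) t) {s t : ℝ}
    (hs : s ∈ I) (ht : t ∈ I) : toyHamiltonian (x t) = toyHamiltonian (x s) :=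
  have hH := fun u hu ↦ hasDerivAt_toyHamiltonian_comp (hx u hu).2 (hx u hu).1
  hIo.is_const_of_deriv_eq_zero hIc (fun u hu ↦ (hH u hu).differentiableAt.differentiableWithinAt)
    (fun u hu ↦ (hH u hu).deriv) ht hs

lemma euclidNormSq_ne_one_of_toyHamiltonian_lt {p : ℝ × ℝ} (hp : toyHamiltonian p < -1 / 2) :
    euclidNormSq p ≠ 1 := by
  intro h1
  have := two_mul_abs_mul_le_euclidNormSq p
  rw [toyHamiltonian, h1, log_one] at hp
  linarith [le_abs_self (p.1 * p.2)]

lemma mem_annulus_of_euclidNormSq_lt_one {p : ℝ × ℝ} (hp : p ≠ 0) (h1 : euclidNormSq p < 1) :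
    p ∈ annulus (exp (2 * toyHamiltonian p - 1)) (exp (2 * toyHamiltonian p + 1)) := by
  have hN := euclidNormSq_pos hp
  have hH : 2 * toyHamiltonian p = log (euclidNormSq p) - 2 * (p.1 * p.2) := by
    rw [toyHamiltonian]; ring
  have hmul := abs_le.1 ((le_div_iff₀' two_pos).2 (two_mul_abs_mul_le_euclidNormSq p))
  constructor
  · rw [← exp_log hN, exp_le_exp]; linarith [hmul.2]
  · rw [← exp_log hN, exp_le_exp]; linarith [hmul.1]

lemma toyHamiltonian_lt_of_euclidNormSq_lt {p : ℝ × ℝ} (h₀ : 0 < euclidNormSq p)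
    (h : euclidNormSq p < exp (-2)) : toyHamiltonian p < -1 / 2 := by
  have hlog : log (euclidNormSq p) < -2 := by simpa using log_lt_log h₀ h
  have h1 : euclidNormSq p < 1 := h.trans (exp_lt_one_iff.2 (by norm_num))
  have hmul := two_mul_abs_mul_le_euclidNormSq p
  rw [toyHamiltonian]
  linarith [neg_abs_le (p.1 * p.2)]

lemma toy_mem_annulus_of_isPreconnected {I : Set ℝ} (hIo : IsOpen I) (hIc : IsPreconnected I)
    {x : ℝ → ℝ × ℝ} (hx : ∀ t ∈ I, x t ≠ 0 ∧ HasDerivAt x (toyRHS (x t)) t) {t₀ : ℝ}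
    (ht₀ : t₀ ∈ I) (hH : toyHamiltonian (x t₀) < -1 / 2) (hN : euclidNormSq (x t₀) < 1) :
    ∀ t ∈ I, x t ∈ annulus (exp (2 * toyHamiltonian (x t₀) - 1))
      (exp (2 * toyHamiltonian (x t₀) + 1)) := by
  intro t ht
  have hNt : euclidNormSq (x t) < 1 := by
    by_contra! h
    have hcont : ContinuousOn (fun s ↦ euclidNormSq (x s)) I := fun s hs ↦
      (continuous_euclidNormSq.continuousAt.comp (hx s hs).2.continuousAt).continuousWithinAt
    obtain ⟨s, hs, hs1⟩ := hIc.intermediate_value ht₀ ht hcont ⟨hN.le, h⟩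
    refine euclidNormSq_ne_one_of_toyHamiltonian_lt ?_ hs1
    rwa [toyHamiltonian_eq_of_isPreconnected hIo hIc hx ht₀ hs]
  rw [← toyHamiltonian_eq_of_isPreconnected hIo hIc hx ht₀ ht]
  exact mem_annulus_of_euclidNormSq_lt_one (hx t ht).1 hNt

lemma hasDerivAt_toy_reflection {x : ℝ → ℝ × ℝ} {t₀ t : ℝ}
    (hx : HasDerivAt x (toyRHS (x (2 * t₀ - t))) (2 * t₀ - t)) :
    HasDerivAt (fun s ↦ (x (2 * t₀ - s)).swap) (toyRHS (x (2 * t₀ - t)).swap) t := by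
  have h : HasDerivAt (fun s ↦ x (2 * t₀ - s)) ((-1 : ℝ) • toyRHS (x (2 * t₀ - t))) t :=
    hx.scomp t (by simpa using (hasDerivAt_id t).const_sub (2 * t₀))
  rw [neg_one_smul] at h
  rw [toyRHS_swap]
  exact h.snd.prodMk h.fst

lemma toy_eq_reflection {m M : ℝ} (hm : 0 < m) {x : ℝ → ℝ × ℝ}
    (hx : ∀ t, HasDerivAt x (toyRHS (x t)) t ∧ x t ∈ annulus m M) {t₀ : ℝ}
    (ht₀ : (x t₀).swap = x t₀) : x = fun t ↦ (x (2 * t₀ - t)).swap := by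
  obtain ⟨K, hK⟩ := (locallyLipschitzOn_toyRHS.mono (annulus_subset_compl_zero hm)
    ).exists_lipschitzOnWith_of_compact (isCompact_annulus m M)
  refine ODE_solution_unique_univ (v := fun _ ↦ toyRHS) (s := fun _ ↦ annulus m M) (t₀ := t₀)
    (fun _ ↦ hK) hx
    (fun t ↦ ⟨hasDerivAt_toy_reflection (hx _).1, swap_mem_annulus (hx _).2⟩) ?_
  rw [two_mul, add_sub_cancel_right, ht₀]

lemma toy_exists_swap_eq {m M : ℝ} (hm : 0 < m) (hM : M < 1) {x : ℝ → ℝ × ℝ}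
    (hx : ∀ t, HasDerivAt x (toyRHS (x t)) t ∧ x t ∈ annulus m M) (T : ℝ) :
    ∃ t ∈ Icc T (T + π / (1 - M)), (x t).swap = x t := by
  have hd : ∀ t, HasDerivAt (fun s ↦ (x s).1) (toyRHS (x t)).1 t ∧
      HasDerivAt (fun s ↦ (x s).2) (toyRHS (x t)).2 t := fun t ↦ ⟨(hx t).1.fst, (hx t).1.snd⟩
  have hrate : ∀ t, (1 - M) * (((x t).1 - (x t).2) ^ 2 + ((x t).1 + (x t).2) ^ 2) ≤
      ((x t).1 - (x t).2) * ((toyRHS (x t)).1 + (toyRHS (x t)).2) -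
        ((x t).1 + (x t).2) * ((toyRHS (x t)).1 - (toyRHS (x t)).2) := fun t ↦ by
    have h₀ := annulus_subset_compl_zero hm (hx t).2
    have hω := toy_angular_speed h₀
    have hmul := two_mul_abs_mul_le_euclidNormSq (x t)
    have hNM : euclidNormSq (x t) ≤ M := (hx t).2.2
    have hN := euclidNormSq_pos h₀
    unfold euclidNormSq at hmul hNM hN
    nlinarith [le_abs_self ((x t).1 * (x t).2)]
  obtain ⟨t, ht, hdiag⟩ := exists_mem_Icc_eq_zero_of_le_angular_speed (a := T)
    (fun t _ ↦ (hd t).1.fun_sub (hd t).2) (fun t _ ↦ (hd t).1.fun_add (hd t).2)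
    (fun t _ ↦ hrate t) (le_add_of_nonneg_right (div_nonneg Real.pi_pos.le (sub_pos.2 hM).le))
    (by rw [add_sub_cancel_left, mul_div_cancel₀ _ (sub_pos.2 hM).ne'])
  exact ⟨t, ht, Prod.ext (by simp only [Prod.fst_swap]; linarith)
    (by simp only [Prod.snd_swap]; linarith)⟩

lemma toy_periodic {m M : ℝ} (hm : 0 < m) (hM : M < 1) {x : ℝ → ℝ × ℝ}
    (hx : ∀ t, HasDerivAt x (toyRHS (x t)) t ∧ x t ∈ annulus m M) :
    ∃ τ > 0, Function.Periodic x τ := by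
  obtain ⟨a, ha, hxa⟩ := toy_exists_swap_eq hm hM hx 0
  obtain ⟨b, hb, hxb⟩ := toy_exists_swap_eq hm hM hx (π / (1 - M) + 1)
  refine ⟨2 * (b - a), by linarith [ha.2, hb.1], fun t ↦ ?_⟩
  calc x (t + 2 * (b - a)) = (x (2 * b - (t + 2 * (b - a)))).swap :=
        congrFun (toy_eq_reflection hm hx hxb) _
    _ = (x (2 * a - t)).swap := by ring_nf
    _ = x t := (congrFun (toy_eq_reflection hm hx hxa) t).symm

/-- There is `r₀ > 0` such that every maximal solution of the toy model
`ẋ₁ = x₁ − x₂/|x|²`, `ẋ₂ = −x₂ + x₁/|x|²` with `0 < |x(0)| < r₀` is global and periodic. -/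
theorem stmt18 :
    ∃ r₀ > (0 : ℝ), ∀ (I : Set ℝ) (x : ℝ → ℝ × ℝ),
      IsOpen I → IsPreconnected I → (0 : ℝ) ∈ I →
      (∀ t ∈ I, x t ≠ 0 ∧ HasDerivAt x (toyRHS (x t)) t) →
      -- maximality: any solution on a larger open interval extending `x` gives no new times
      (∀ (J : Set ℝ) (y : ℝ → ℝ × ℝ), IsOpen J → IsPreconnected J → I ⊆ J →
        (∀ t ∈ J, y t ≠ 0 ∧ HasDerivAt y (toyRHS (y t)) t) →
        (∀ t ∈ I, y t = x t) → J ⊆ I) →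
      0 < Real.sqrt ((x 0).1 ^ 2 + (x 0).2 ^ 2) →
      Real.sqrt ((x 0).1 ^ 2 + (x 0).2 ^ 2) < r₀ →
      I = Set.univ ∧ ∃ τ > (0 : ℝ), ∀ t : ℝ, x (t + τ) = x t := by
  refine ⟨exp (-1), exp_pos _, fun I x hIo hIc hI₀ hx hmax hpos hlt ↦ ?_⟩
  have hN₀ : 0 < euclidNormSq (x 0) := sqrt_pos.1 hpos
  have hN : euclidNormSq (x 0) < exp (-2) := by
    rwa [sqrt_lt' (exp_pos _), ← exp_nat_mul, Nat.cast_ofNat, mul_neg_one] at hlt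
  have hH := toyHamiltonian_lt_of_euclidNormSq_lt hN₀ hN
  have hxA := toy_mem_annulus_of_isPreconnected hIo hIc hx hI₀ hH
    (hN.trans (exp_lt_one_iff.2 (by norm_num)))
  obtain rfl : I = univ := eq_univ_of_forall_mem_isCompact isOpen_compl_singleton
    locallyLipschitzOn_toyRHS (isCompact_annulus _ _) (annulus_subset_compl_zero (exp_pos _))
    hIo hIc ⟨0, hI₀⟩ hx hxA hmax
  exact ⟨rfl, toy_periodic (exp_pos _) (exp_lt_one_iff.2 (by linarith))
    fun t ↦ ⟨(hx t trivial).2, hxA t trivial⟩⟩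
end
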